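/- Let n ≥ 1, σ > 0, γ ≥ 0, let A be an invertible n×n real matrix, and let x, z, Δ ∈ ℝⁿ with ‖A⁻¹ Δ‖₂ ≤ γ. Set k = exp(−‖x−z‖₂²/(2σ²)), τ = exp(−2γ‖A^⊤(x−z)‖₂/(2σ²)), and ρ = exp(−γ²‖A‖²/(2σ²)), where ‖A‖ is the operator norm of A. Then (exp(−‖x+Δ−z‖₂²/(2σ²)) − exp(−‖x−z‖₂²/(2σ²)))² ≤ k² (1/τ² + 1) − 2 ρ k² τ. -/

import Mathlib

open Real Matrix Finset

/-!
Expanding the square, `‖x + Δ - z‖² = ‖x - z‖² + 2⟪x - z, Δ⟫ + ‖Δ‖²`, so the perturbed kernel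
value is `k · e` with `e = exp (-(2⟪x - z, Δ⟫ + ‖Δ‖²) / (2σ²))`. Writing
`⟪x - z, Δ⟫ = ⟪Aᵀ(x - z), A⁻¹Δ⟫`, Cauchy–Schwarz gives `|⟪x - z, Δ⟫| ≤ γ ‖Aᵀ(x - z)‖`, and
`‖Δ‖ ≤ ‖A‖ ‖A⁻¹Δ‖ ≤ γ ‖A‖`. Hence `ρτ ≤ e ≤ 1/τ`, and `(k e - k)² = k² (e² - 2e + 1)` is bounded
term by term.
-/

lemma sq_mul_sub_self_le {K e τ ρ : ℝ} (he : 0 ≤ e) (hlo : ρ * τ ≤ e) (hhi : e ≤ 1 / τ) :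
    (K * e - K) ^ 2 ≤ K ^ 2 * (1 / τ ^ 2 + 1) - 2 * ρ * K ^ 2 * τ := by
  have hsq : e ^ 2 ≤ 1 / τ ^ 2 := by
    simpa only [one_div, inv_pow] using pow_le_pow_left₀ he hhi 2
  calc (K * e - K) ^ 2 = K ^ 2 * (e ^ 2 - 2 * e + 1) := by ring
    _ ≤ K ^ 2 * (1 / τ ^ 2 + 1 - 2 * (ρ * τ)) := by gcongr; linarith
    _ = K ^ 2 * (1 / τ ^ 2 + 1) - 2 * ρ * K ^ 2 * τ := by ring

lemma exp_neg_add_div_sub_sq_le {D b u c m : ℝ} (hD : 0 ≤ D) (hlo : -c ≤ u) (hhi : u ≤ c + m) :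
    (exp (-(b + u) / D) - exp (-b / D)) ^ 2 ≤
      exp (-b / D) ^ 2 * (1 / exp (-c / D) ^ 2 + 1)
        - 2 * exp (-m / D) * exp (-b / D) ^ 2 * exp (-c / D) := by
  rw [show -(b + u) / D = -b / D + -u / D by ring, exp_add]
  refine sq_mul_sub_self_le (exp_nonneg _) ?_ ?_
  · rw [← exp_add, exp_le_exp, ← add_div]
    exact div_le_div_of_nonneg_right (by linarith) hD
  · rw [one_div, ← exp_neg, exp_le_exp, ← neg_div]
    exact div_le_div_of_nonneg_right (by linarith) hD

section Euclidean

variable {ι : Type*} [Fintype ι]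

lemma abs_dotProduct_le_sqrt_mul_sqrt (u v : ι → ℝ) :
    |u ⬝ᵥ v| ≤ √(∑ i, u i ^ 2) * √(∑ i, v i ^ 2) := by
  simpa [EuclideanSpace.inner_toLp_toLp, dotProduct_comm, EuclideanSpace.norm_eq] using
    abs_real_inner_le_norm (WithLp.toLp 2 u) (WithLp.toLp 2 v)

lemma sum_add_sub_sq_eq (x z Δ : ι → ℝ) :
    ∑ i, (x i + Δ i - z i) ^ 2 = ∑ i, (x i - z i) ^ 2 + (2 * ((x - z) ⬝ᵥ Δ) + ∑ i, Δ i ^ 2) := by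
  simp only [dotProduct, Pi.sub_apply, mul_sum, ← sum_add_distrib]
  exact sum_congr rfl fun i _ => by ring

variable [DecidableEq ι]

lemma sum_sq_mulVec_le (A : Matrix ι ι ℝ) (v : ι → ℝ) :
    ∑ i, (A *ᵥ v) i ^ 2 ≤ ‖toEuclideanCLM (𝕜 := ℝ) A‖ ^ 2 * ∑ i, v i ^ 2 := by
  have := pow_le_pow_left₀ (norm_nonneg _)
    ((toEuclideanCLM (𝕜 := ℝ) A).le_opNorm (WithLp.toLp 2 v)) 2
  simpa only [mul_pow, EuclideanSpace.real_norm_sq_eq, toEuclideanCLM_toLp] using this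

lemma dotProduct_eq_transpose_mulVec_dotProduct_inv_mulVec {R : Type*} [CommRing R]
    {A : Matrix ι ι R} (hA : IsUnit A.det) (u v : ι → R) :
    u ⬝ᵥ v = (Aᵀ *ᵥ u) ⬝ᵥ (A⁻¹ *ᵥ v) := by
  rw [dotProduct_mulVec, mulVec_transpose, vecMul_vecMul, mul_nonsing_inv _ hA, vecMul_one]

end Euclidean

theorem stmt_11_general (n : ℕ) (σ : ℝ) (γ : ℝ)
    (A : Matrix (Fin n) (Fin n) ℝ) (hA : IsUnit A.det)
    (x z Δ : Fin n → ℝ)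
    (h : Real.sqrt (∑ k, ((A⁻¹ *ᵥ Δ) k) ^ 2) ≤ γ)
    (K τ ρ : ℝ)
    (hK : K = Real.exp (-(∑ k, (x k - z k) ^ 2) / (2 * σ ^ 2)))
    (hτ : τ = Real.exp (-(2 * γ * Real.sqrt (∑ k, ((Aᵀ *ᵥ (x - z)) k) ^ 2)) / (2 * σ ^ 2)))
    (hρ : ρ = Real.exp (-(γ ^ 2 * ‖Matrix.toEuclideanCLM (𝕜 := ℝ) A‖ ^ 2) / (2 * σ ^ 2))) :
    (Real.exp (-(∑ k, (x k + Δ k - z k) ^ 2) / (2 * σ ^ 2))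
        - Real.exp (-(∑ k, (x k - z k) ^ 2) / (2 * σ ^ 2))) ^ 2
      ≤ K ^ 2 * (1 / τ ^ 2 + 1) - 2 * ρ * K ^ 2 * τ := by
  subst hK hτ hρ
  have hinv : ∑ k, (A⁻¹ *ᵥ Δ) k ^ 2 ≤ γ ^ 2 := (sqrt_le_iff.mp h).2
  have hcross : |(x - z) ⬝ᵥ Δ| ≤ γ * √(∑ k, (Aᵀ *ᵥ (x - z)) k ^ 2) := by
    rw [dotProduct_eq_transpose_mulVec_dotProduct_inv_mulVec hA, mul_comm γ]
    exact (abs_dotProduct_le_sqrt_mul_sqrt _ _).trans (by gcongr)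
  have hsq : ∑ k, Δ k ^ 2 ≤ γ ^ 2 * ‖toEuclideanCLM (𝕜 := ℝ) A‖ ^ 2 := by
    have := sum_sq_mulVec_le A (A⁻¹ *ᵥ Δ)
    rw [mulVec_mulVec, mul_nonsing_inv _ hA, one_mulVec] at this
    rw [mul_comm]
    exact this.trans (by gcongr)
  rw [sum_add_sub_sq_eq]
  apply exp_neg_add_div_sub_sq_le (by positivity)
  · linarith [neg_abs_le ((x - z) ⬝ᵥ Δ),
      sum_nonneg fun k (_ : k ∈ univ) => sq_nonneg (Δ k)]
  · linarith [le_abs_self ((x - z) ⬝ᵥ Δ)]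

/-- Per-landmark bound of Proposition 2: with `K = k_σ(x,z)`,
`τ = exp(−2γ‖Aᵀ(x−z)‖₂/(2σ²))` and `ρ = exp(−γ²‖A‖²/(2σ²))`,
the squared Gaussian kernel difference satisfies
`(k_σ(x+Δ,z) − k_σ(x,z))² ≤ K²(1/τ² + 1) − 2ρK²τ`. -/
theorem stmt_11 (n : ℕ) (hn : 1 ≤ n) (σ : ℝ) (hσ : 0 < σ) (γ : ℝ) (hγ : 0 ≤ γ)
    (A : Matrix (Fin n) (Fin n) ℝ) (hA : IsUnit A.det)
    (x z Δ : Fin n → ℝ)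
    (h : Real.sqrt (∑ k, ((A⁻¹ *ᵥ Δ) k) ^ 2) ≤ γ)
    (K τ ρ : ℝ)
    (hK : K = Real.exp (-(∑ k, (x k - z k) ^ 2) / (2 * σ ^ 2)))
    (hτ : τ = Real.exp (-(2 * γ * Real.sqrt (∑ k, ((Aᵀ *ᵥ (x - z)) k) ^ 2)) / (2 * σ ^ 2)))
    (hρ : ρ = Real.exp (-(γ ^ 2 * ‖Matrix.toEuclideanCLM (𝕜 := ℝ) A‖ ^ 2) / (2 * σ ^ 2))) :
    (Real.exp (-(∑ k, (x k + Δ k - z k) ^ 2) / (2 * σ ^ 2))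
        - Real.exp (-(∑ k, (x k - z k) ^ 2) / (2 * σ ^ 2))) ^ 2
      ≤ K ^ 2 * (1 / τ ^ 2 + 1) - 2 * ρ * K ^ 2 * τ :=
  stmt_11_general n σ γ A hA x z Δ h K τ ρ hK hτ hρ
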